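/- For m < 0, suppose the equation x(k+1) = A(k)x(k) has an exponential dichotomy on (−∞, m] with projection P(k) of rank r. Then the equation has an exponential dichotomy on (−∞, 0] with a projection of rank r if and only if Φ(0,m) = A(−1)···A(m) is one-to-one on N(P(m)). -/

import Mathlib

noncomputable section

open scoped BigOperators

/-- ℝⁿ as a Euclidean space. -/
abbrev Euc (n : ℕ) := EuclideanSpace ℝ (Fin n)

/-- The transition matrix `Φ(k,m) = A(k-1) ⋯ A(m)`, with `Φ(m,m) = 1`
(and `Φ(k,m) = 1` when `k ≤ m`). -/
def Phi {n : ℕ} (A : ℤ → (Euc n →L[ℝ] Euc n)) (k m : ℤ) : Euc n →L[ℝ] Euc n :=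
  (((List.range (k - m).toNat).map fun i => A (m + i)).reverse).prod

/-- `J` is an interval of integers. -/
def IsIntInterval (J : Set ℤ) : Prop :=
  ∀ ⦃a b c : ℤ⦄, a ∈ J → b ∈ J → a ≤ c → c ≤ b → c ∈ J

/-- The equation `x(k+1) = A(k) x(k)` has an exponential dichotomy on `J` with
projection family `P`, constant `K` and exponent `α`. -/
structure ExpDichotomyOn {n : ℕ} (A : ℤ → (Euc n →L[ℝ] Euc n)) (J : Set ℤ)
    (P : ℤ → (Euc n →L[ℝ] Euc n)) (K α : ℝ) : Prop where
  one_le_K : 1 ≤ K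
  alpha_pos : 0 < α
  proj : ∀ k ∈ J, P k ∘L P k = P k
  rank_const : ∀ k ∈ J, ∀ m ∈ J,
    Module.finrank ℝ (LinearMap.range (P k : Euc n →ₗ[ℝ] Euc n)) = Module.finrank ℝ (LinearMap.range (P m : Euc n →ₗ[ℝ] Euc n))
  invariance : ∀ m ∈ J, ∀ k ∈ J, m ≤ k → Phi A k m ∘L P m = P k ∘L Phi A k m
  forward : ∀ m ∈ J, ∀ k ∈ J, m ≤ k →
    ‖Phi A k m ∘L P m‖ ≤ K * Real.exp (-α * ((k : ℝ) - (m : ℝ)))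
  bijOn : ∀ k : ℤ, k ∈ J → k + 1 ∈ J →
    Set.BijOn (A k) (LinearMap.ker (P k : Euc n →ₗ[ℝ] Euc n) : Set (Euc n)) (LinearMap.ker (P (k + 1) : Euc n →ₗ[ℝ] Euc n) : Set (Euc n))
  backward : ∃ Ψ : ℤ → ℤ → (Euc n →L[ℝ] Euc n), ∀ m ∈ J, ∀ k ∈ J, m ≤ k →
    (∀ x ∈ LinearMap.ker (P m : Euc n →ₗ[ℝ] Euc n), Ψ m k (Phi A k m x) = x) ∧
    (∀ x ∈ LinearMap.ker (P k : Euc n →ₗ[ℝ] Euc n), Ψ m k x ∈ LinearMap.ker (P m : Euc n →ₗ[ℝ] Euc n) ∧ Phi A k m (Ψ m k x) = x) ∧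
    ‖Ψ m k ∘L (1 - P k)‖ ≤ K * Real.exp (-α * ((k : ℝ) - (m : ℝ)))

/-!
A dichotomy on `(-∞, 0]` forces its kernels: `N(Q(m))` consists of the initial values of the
solutions that decay backward in time, so it contains `N(P(m))`, and `Φ(0, m)` is injective on it.

Conversely, transport the kernels forward, `U(k) = Φ(k, m) N(P(m))` for `m ≤ k ≤ 0`, so that
`Φ(k, j)` maps `U(j)` bijectively onto `U(k)`. The ranges of `P` cannot be kept, as
`Φ(0, m) R(P(m))` may meet `U(0)`; instead fix a complement `Z` of `U(0)` and take the ranges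
`Φ(0, k)⁻¹ Z`, which complement `U(k)` for all `k ≤ 0`. The resulting projections are invariant;
on `(-∞, m]` they share their kernels with `P`, which preserves the dichotomy estimates, and the
finitely many remaining steps only cost a constant.
-/

section LinearAlgebra

open Set

variable {𝕜 E F : Type*}

lemma isCompl_comap_of_injOn [Ring 𝕜] [AddCommGroup E] [Module 𝕜 E] [AddCommGroup F] [Module 𝕜 F]
    {f : E →ₗ[𝕜] F} {U : Submodule 𝕜 E} {Z : Submodule 𝕜 F} (hf : InjOn f U)
    (h : IsCompl (U.map f) Z) : IsCompl (Z.comap f) U := by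
  constructor
  · refine Submodule.disjoint_def.mpr fun x hxZ hxU => hf hxU U.zero_mem ?_
    rw [map_zero]
    exact Submodule.disjoint_def.mp h.disjoint _ (Submodule.mem_map_of_mem hxU) hxZ
  · refine codisjoint_iff.mpr (eq_top_iff.mpr fun x _ => ?_)
    have hfx : f x ∈ U.map f ⊔ Z := h.sup_eq_top ▸ Submodule.mem_top
    obtain ⟨_, ⟨u, hu, rfl⟩, z, hz, hsum⟩ := Submodule.mem_sup.mp hfx
    have hxu : x - u ∈ Z.comap f := by
      rw [Submodule.mem_comap, map_sub, ← hsum, add_sub_cancel_left]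
      exact hz
    exact Submodule.mem_sup.mpr ⟨x - u, hxu, u, hu, sub_add_cancel x u⟩

lemma finrank_eq_of_bijOn [DivisionRing 𝕜] [AddCommGroup E] [Module 𝕜 E] [AddCommGroup F]
    [Module 𝕜 F] {f : E →ₗ[𝕜] F} {p : Submodule 𝕜 E} {q : Submodule 𝕜 F}
    (h : BijOn f p q) : Module.finrank 𝕜 p = Module.finrank 𝕜 q := by
  have hq : q = p.map f := SetLike.coe_injective (by rw [Submodule.map_coe, h.image_eq])
  rw [hq, ← LinearMap.range_domRestrict, LinearMap.finrank_range_of_inj]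
  exact fun a b hab => Subtype.ext (h.injOn a.2 b.2 hab)

lemma finrank_range_eq_of_finrank_ker_eq [DivisionRing 𝕜] [AddCommGroup E] [Module 𝕜 E]
    [FiniteDimensional 𝕜 E] [AddCommGroup F] [Module 𝕜 F] {f g : E →ₗ[𝕜] F}
    (h : Module.finrank 𝕜 f.ker = Module.finrank 𝕜 g.ker) :
    Module.finrank 𝕜 f.range = Module.finrank 𝕜 g.range := by
  have hf := f.finrank_range_add_finrank_ker
  have hg := g.finrank_range_add_finrank_ker
  omega

variable [NontriviallyNormedField 𝕜] [NormedAddCommGroup E] [NormedSpace 𝕜 E]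
  [NormedAddCommGroup F] [NormedSpace 𝕜 F]

lemma exists_idempotent_range_ker [CompleteSpace 𝕜] [FiniteDimensional 𝕜 E]
    {p q : Submodule 𝕜 E} (h : IsCompl p q) :
    ∃ f : E →L[𝕜] E, f ∘L f = f ∧ f.toLinearMap.range = p ∧ f.toLinearMap.ker = q := by
  have ht := Submodule.IsCompl.isTopCompl_of_isClosed_of_finiteDimensional h
    p.closed_of_finiteDimensional
  exact ⟨p.projectionL q ht, Submodule.isIdempotentElem_projectionL ht,
    Submodule.range_projectionL ht, Submodule.ker_projectionL ht⟩

lemma exists_invOn_of_bijOn [CompleteSpace 𝕜] [FiniteDimensional 𝕜 F] {f : E →L[𝕜] F}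
    {p : Submodule 𝕜 E} {q : Submodule 𝕜 F} (h : BijOn f p q) :
    ∃ g : F →L[𝕜] E, (∀ x ∈ p, g (f x) = x) ∧ (∀ y ∈ q, g y ∈ p ∧ f (g y) = y) := by
  obtain ⟨g, hg⟩ := (f.toLinearMap.domRestrict p).exists_leftInverse_of_injective
    (LinearMap.ker_eq_bot.mpr fun a b hab => Subtype.ext (h.injOn a.2 b.2 hab))
  have hleft : ∀ x ∈ p, (g (f x) : E) = x := fun x hx =>
    congrArg Subtype.val (LinearMap.congr_fun hg ⟨x, hx⟩)
  refine ⟨(p.subtype ∘ₗ g).toContinuousLinearMap, hleft, fun y hy => ?_⟩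
  obtain ⟨x, hx, rfl⟩ := h.surjOn hy
  have hx' : x ∈ p := hx
  exact ⟨by simpa [hleft x hx'] using hx', by simp [hleft x hx']⟩

lemma one_sub_apply_mem_ker {P : E →L[𝕜] E} (hP : P ∘L P = P) (x : E) :
    (1 - P) x ∈ P.toLinearMap.ker := by
  simp [← ContinuousLinearMap.comp_apply, hP]

lemma norm_apply_le_of_mem_ker {T : E →L[𝕜] F} {P : E →L[𝕜] E} {x : E}
    (hx : x ∈ P.toLinearMap.ker) : ‖T x‖ ≤ ‖T ∘L (1 - P)‖ * ‖x‖ := by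
  have hx' : (1 - P) x = x := by simpa using hx
  calc ‖T x‖ = ‖(T ∘L (1 - P)) x‖ := by rw [ContinuousLinearMap.comp_apply, hx']
    _ ≤ ‖T ∘L (1 - P)‖ * ‖x‖ := (T ∘L (1 - P)).le_opNorm x

lemma apply_apply_eq_of_ker_le {P Q : E →L[𝕜] E} (hQ : Q ∘L Q = Q)
    (h : Q.toLinearMap.ker ≤ P.toLinearMap.ker) (x : E) : P (Q x) = P x := by
  have hx := h (one_sub_apply_mem_ker hQ x)
  have hdiff : P x - P (Q x) = 0 := by simpa using hx
  exact (sub_eq_zero.mp hdiff).symm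

lemma comp_eq_comp_of_mapsTo {f P P' : E →L[𝕜] E} (hP : P ∘L P = P) (hP' : P' ∘L P' = P')
    (hrange : MapsTo f P.toLinearMap.range P'.toLinearMap.range)
    (hker : MapsTo f P.toLinearMap.ker P'.toLinearMap.ker) : f ∘L P = P' ∘L f := by
  ext x
  obtain ⟨y, hy⟩ : f (P x) ∈ P'.toLinearMap.range := hrange ⟨x, rfl⟩
  have hfix : P' (f (P x)) = f (P x) := by
    rw [← hy]; exact congrArg (· y) hP'
  have hzero : P' (f ((1 - P) x)) = 0 := hker (one_sub_apply_mem_ker hP x)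
  have hsplit : x = P x + (1 - P) x := by simp
  simp only [ContinuousLinearMap.comp_apply]
  conv_rhs => rw [hsplit, map_add, map_add, hfix, hzero, add_zero]

end LinearAlgebra

section ExponentialBound

open Set Real

lemma mul_exp_le_self {K α : ℝ} (hK : 0 ≤ K) (hα : 0 ≤ α) {j k : ℤ} (hjk : j ≤ k) :
    K * exp (-α * ((k : ℝ) - j)) ≤ K := by
  have : (j : ℝ) ≤ k := by exact_mod_cast hjk
  exact mul_le_of_le_one_right hK (exp_le_one_iff.mpr (by nlinarith))

lemma exists_exp_bound_of_cross_bound {a : ℤ → ℤ → ℝ} {b : ℤ → ℝ} {α C : ℝ} {m l : ℤ}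
    (hml : m ≤ l) (hα : 0 ≤ α) (hC : 0 ≤ C) (hb : ∀ k, 0 ≤ b k)
    (hleft : ∀ j k, j ≤ k → k ≤ m → a j k ≤ C * exp (-α * ((k : ℝ) - j)))
    (hcross : ∀ j k, j ≤ m → m ≤ k → k ≤ l → a j k ≤ b k * a j m) :
    ∃ C', ∀ j k, j ≤ k → k ≤ l → a j k ≤ C' * exp (-α * ((k : ℝ) - j)) := by
  obtain ⟨B, hB⟩ := ((finite_Icc m l).image b).bddAbove
  obtain ⟨M, hM⟩ := (((finite_Icc m l).prod (finite_Icc m l)).image fun p => a p.1 p.2).bddAbove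
  have hB0 : 0 ≤ B := (hb m).trans (hB ⟨m, ⟨le_rfl, hml⟩, rfl⟩)
  set E := exp (α * ((l : ℝ) - m))
  -- `E` pays for the at most `l - m` steps taken outside `(-∞, m]`
  have hcross_exp : ∀ j k : ℤ, k ≤ l →
      exp (-α * ((m : ℝ) - j)) ≤ E * exp (-α * ((k : ℝ) - j)) := by
    intro j k hkl
    have hkl' : (k : ℝ) ≤ l := by exact_mod_cast hkl
    rw [← exp_add]
    exact exp_le_exp.mpr (by nlinarith)
  have hright_exp : ∀ j k : ℤ, m ≤ j → k ≤ l → 1 ≤ E * exp (-α * ((k : ℝ) - j)) := by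
    intro j k hmj hkl
    have hmj' : (m : ℝ) ≤ j := by exact_mod_cast hmj
    have hkl' : (k : ℝ) ≤ l := by exact_mod_cast hkl
    rw [← exp_add]
    exact one_le_exp (by nlinarith)
  refine ⟨C + B * C * E + max M 0 * E, fun j k hjk hkl => ?_⟩
  have hexp := exp_pos (-α * ((k : ℝ) - j))
  have hE : 0 < E := exp_pos _
  have hBCE : 0 ≤ B * C * E := by positivity
  have hME : 0 ≤ max M 0 * E := mul_nonneg (le_max_right M 0) hE.le
  rcases le_or_gt k m with hkm | hmk
  · refine (hleft j k hjk hkm).trans (mul_le_mul_of_nonneg_right ?_ hexp.le)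
    linarith
  rcases le_or_gt j m with hjm | hmj
  · have hbk : b k ≤ B := hB ⟨k, ⟨hmk.le, hkl⟩, rfl⟩
    have hajm := hleft j m hjm le_rfl
    calc a j k ≤ b k * a j m := hcross j k hjm hmk.le hkl
      _ ≤ b k * (C * exp (-α * ((m : ℝ) - j))) := mul_le_mul_of_nonneg_left hajm (hb k)
      _ ≤ B * (C * exp (-α * ((m : ℝ) - j))) :=
          mul_le_mul_of_nonneg_right hbk (by positivity)
      _ ≤ B * (C * (E * exp (-α * ((k : ℝ) - j)))) := by
          gcongr; exact hcross_exp j k hkl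
      _ ≤ (C + B * C * E + max M 0 * E) * exp (-α * ((k : ℝ) - j)) := by
          nlinarith [mul_nonneg hC hexp.le, mul_nonneg hME hexp.le]
  · have hajk : a j k ≤ M := hM ⟨(j, k), ⟨⟨hmj.le, hjk.trans hkl⟩, ⟨hmk.le, hkl⟩⟩, rfl⟩
    calc a j k ≤ max M 0 * 1 := by rw [mul_one]; exact hajk.trans (le_max_left M 0)
      _ ≤ max M 0 * (E * exp (-α * ((k : ℝ) - j))) :=
          mul_le_mul_of_nonneg_left (hright_exp j k hmj.le hkl) (le_max_right M 0)
      _ ≤ (C + B * C * E + max M 0 * E) * exp (-α * ((k : ℝ) - j)) := by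
          nlinarith [mul_nonneg hC hexp.le, mul_nonneg hBCE hexp.le]

end ExponentialBound

section Transition

variable {n : ℕ} (A : ℤ → (Euc n →L[ℝ] Euc n))

lemma Phi_self (k : ℤ) : Phi A k k = 1 := by
  simp [Phi]

lemma Phi_succ {k m : ℤ} (h : m ≤ k) : Phi A (k + 1) m = A k ∘L Phi A k m := by
  have h1 : (k + 1 - m).toNat = (k - m).toNat + 1 := by omega
  have h2 : (k - m) ⊔ 0 = k - m := max_eq_left (by omega)
  simp [Phi, h1, List.range_succ, h2]
  rfl

lemma Phi_succ_self (k : ℤ) : Phi A (k + 1) k = A k := by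
  rw [Phi_succ A le_rfl, Phi_self]
  exact mul_one (A k)

lemma Phi_trans {j k l : ℤ} (hjk : j ≤ k) (hkl : k ≤ l) :
    Phi A l j = Phi A l k ∘L Phi A k j := by
  induction l, hkl using Int.leInduction with
  | base => rw [Phi_self]; exact (one_mul _).symm
  | succ l hkl ih => rw [Phi_succ A (hjk.trans hkl), Phi_succ A hkl, ih]; rfl

lemma Phi_trans_apply {j k l : ℤ} (hjk : j ≤ k) (hkl : k ≤ l) (x : Euc n) :
    Phi A l j x = Phi A l k (Phi A k j x) := by
  rw [Phi_trans A hjk hkl]; rfl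

end Transition

namespace ExpDichotomyOn

open Set Real

variable {n : ℕ} {A P : ℤ → (Euc n →L[ℝ] Euc n)} {J : Set ℤ} {K α : ℝ}

lemma mono (h : ExpDichotomyOn A J P K α) {J' : Set ℤ} (hJ : J' ⊆ J) :
    ExpDichotomyOn A J' P K α := by
  obtain ⟨Ψ, hΨ⟩ := h.backward
  exact ⟨h.one_le_K, h.alpha_pos, fun k hk => h.proj k (hJ hk),
    fun k hk m hm => h.rank_const k (hJ hk) m (hJ hm),
    fun m hm k hk hmk => h.invariance m (hJ hm) k (hJ hk) hmk,
    fun m hm k hk hmk => h.forward m (hJ hm) k (hJ hk) hmk,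
    fun k hk hk1 => h.bijOn k (hJ hk) (hJ hk1),
    ⟨Ψ, fun m hm k hk hmk => hΨ m (hJ hm) k (hJ hk) hmk⟩⟩

lemma bijOn_ker (h : ExpDichotomyOn A J P K α) {j k : ℤ} (hj : j ∈ J) (hk : k ∈ J)
    (hjk : j ≤ k) :
    BijOn (Phi A k j) (P j).toLinearMap.ker (P k).toLinearMap.ker := by
  obtain ⟨Ψ, hΨ⟩ := h.backward
  obtain ⟨hleft, hright, -⟩ := hΨ j hj k hk hjk
  refine ⟨fun x hx => ?_, fun x hx y hy hxy => ?_, fun y hy => ⟨Ψ j k y, hright y hy⟩⟩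
  · have hinv := congrArg (· x) (h.invariance j hj k hk hjk)
    simp only [ContinuousLinearMap.comp_apply] at hinv
    simp only [SetLike.mem_coe, LinearMap.mem_ker, ContinuousLinearMap.coe_coe] at hx ⊢
    rw [← hinv, hx, map_zero]
  · rw [← hleft x hx, ← hleft y hy, hxy]

lemma map_ker (h : ExpDichotomyOn A J P K α) {j k : ℤ} (hj : j ∈ J) (hk : k ∈ J) (hjk : j ≤ k) :
    (P j).toLinearMap.ker.map (Phi A k j).toLinearMap = (P k).toLinearMap.ker :=
  SetLike.coe_injective (by rw [Submodule.map_coe]; exact (h.bijOn_ker hj hk hjk).image_eq)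

lemma norm_forward_le (h : ExpDichotomyOn A J P K α) {j k : ℤ} (hj : j ∈ J) (hk : k ∈ J)
    (hjk : j ≤ k) : ‖Phi A k j ∘L P j‖ ≤ K :=
  (h.forward j hj k hk hjk).trans
    (mul_exp_le_self (zero_le_one.trans h.one_le_K) h.alpha_pos.le hjk)

lemma proj_apply (h : ExpDichotomyOn A J P K α) {k : ℤ} (hk : k ∈ J) (x : Euc n) :
    P k (P k x) = P k x :=
  congrArg (· x) (h.proj k hk)

lemma norm_le (h : ExpDichotomyOn A J P K α) {k : ℤ} (hk : k ∈ J) : ‖P k‖ ≤ K := by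
  have := h.norm_forward_le hk hk le_rfl
  rwa [Phi_self, ← ContinuousLinearMap.mul_def, one_mul] at this

lemma ker_le_ker {Q : ℤ → (Euc n →L[ℝ] Euc n)} {K' α' : ℝ} {m : ℤ}
    (hP : ExpDichotomyOn A {k | k ≤ m} P K α) (hQ : ExpDichotomyOn A {k | k ≤ m} Q K' α') :
    (P m).toLinearMap.ker ≤ (Q m).toLinearMap.ker := by
  intro x hx
  obtain ⟨Ψ, hΨ⟩ := hP.backward
  have hdecay : ∀ N : ℕ, ‖Q m x‖ ≤ K' * K * ‖x‖ * exp (-α * N) := by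
    intro N
    have hj : m - N ≤ m := by omega
    obtain ⟨-, hright, hnorm⟩ := hΨ (m - N) hj m (le_refl m) hj
    obtain ⟨hy, hΦy⟩ := hright x hx
    have hy_norm : ‖Ψ (m - N) m x‖ ≤ K * exp (-α * N) * ‖x‖ :=
      (norm_apply_le_of_mem_ker hx).trans
        (mul_le_mul_of_nonneg_right (by simpa using hnorm) (norm_nonneg x))
    have hQx : Q m x = (Phi A m (m - N) ∘L Q (m - N)) (Ψ (m - N) m x) := by
      rw [hQ.invariance _ hj m (le_refl m) hj, ContinuousLinearMap.comp_apply, hΦy]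
    calc ‖Q m x‖ ≤ K' * ‖Ψ (m - N) m x‖ := by
          rw [hQx]
          exact (ContinuousLinearMap.le_opNorm _ _).trans (mul_le_mul_of_nonneg_right
            (hQ.norm_forward_le hj (le_refl m) hj) (norm_nonneg _))
      _ ≤ K' * (K * exp (-α * N) * ‖x‖) :=
          mul_le_mul_of_nonneg_left hy_norm (zero_le_one.trans hQ.one_le_K)
      _ = K' * K * ‖x‖ * exp (-α * N) := by ring
  have hlim : Filter.Tendsto (fun N : ℕ => K' * K * ‖x‖ * exp (-α * N)) Filter.atTop (nhds 0) := by
    have := (tendsto_exp_atBot.comp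
      (tendsto_natCast_atTop_atTop.const_mul_atTop_of_neg (neg_lt_zero.mpr hP.alpha_pos)))
    simpa using this.const_mul (K' * K * ‖x‖)
  exact norm_le_zero_iff.mp (ge_of_tendsto' hlim hdecay)

end ExpDichotomyOn

section ChangeOfRange

open Real

variable {n : ℕ} {A P Q : ℤ → (Euc n →L[ℝ] Euc n)} {K α : ℝ} {m : ℤ}

lemma norm_sub_le_of_ker_eq (hP : ExpDichotomyOn A {k | k ≤ m} P K α)
    (hproj : ∀ k ≤ m, Q k ∘L Q k = Q k)
    (hinv : ∀ j k, j ≤ k → k ≤ m → Phi A k j ∘L Q j = Q k ∘L Phi A k j)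
    (hker : ∀ k ≤ m, (Q k).toLinearMap.ker = (P k).toLinearMap.ker) {k : ℤ} (hk : k ≤ m) :
    ‖Q k - P k‖ ≤ K ^ 2 * ‖Q m - P m‖ := by
  obtain ⟨Ψ, hΨ⟩ := hP.backward
  obtain ⟨hleft, -, hΨnorm⟩ := hΨ k hk m (le_refl m) hk
  have hK : 0 ≤ K := zero_le_one.trans hP.one_le_K
  have hPQ : ∀ x, P k (Q k x) = P k x :=
    apply_apply_eq_of_ker_le (hproj k hk) (hker k hk).le
  have hQP : ∀ z, Q m (P m z) = Q m z :=
    apply_apply_eq_of_ker_le (hP.proj m (le_refl m)) (hker m le_rfl).ge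
  refine ContinuousLinearMap.opNorm_le_bound _ (by positivity) fun x => ?_
  -- `Q k - P k` takes values in `N(P k)`, where `Ψ k m` undoes `Φ(m, k)`, and
  -- `Φ(m, k) (Q k - P k) = (Q m - P m) Φ(m, k) P k`.
  have hmem : (Q k - P k) x ∈ (P k).toLinearMap.ker := by
    simp [hPQ, hP.proj_apply hk]
  have hΦ : Phi A m k ((Q k - P k) x) = (Q m - P m) ((Phi A m k ∘L P k) x) := by
    have hQinv := congrArg (· x) (hinv k m hk le_rfl)
    have hPinv := congrArg (· x) (hP.invariance k hk m (le_refl m) hk)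
    simp only [ContinuousLinearMap.comp_apply] at hQinv hPinv ⊢
    rw [sub_apply, map_sub, hQinv, hPinv, sub_apply,
      hQP, hP.proj_apply (le_refl m)]
  have hΦmem := (hP.bijOn_ker hk (le_refl m) hk).mapsTo hmem
  calc ‖(Q k - P k) x‖ = ‖Ψ k m (Phi A m k ((Q k - P k) x))‖ := by rw [hleft _ hmem]
    _ ≤ ‖Ψ k m ∘L (1 - P m)‖ * ‖Phi A m k ((Q k - P k) x)‖ := norm_apply_le_of_mem_ker hΦmem
    _ ≤ K * (‖Q m - P m‖ * (K * ‖x‖)) := by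
        rw [hΦ]
        refine mul_le_mul (hΨnorm.trans (mul_exp_le_self hK hP.alpha_pos.le hk)) ?_
          (norm_nonneg _) hK
        refine ((Q m - P m).le_opNorm _).trans (mul_le_mul_of_nonneg_left ?_ (norm_nonneg _))
        exact ((Phi A m k ∘L P k).le_opNorm x).trans
          (mul_le_mul_of_nonneg_right (hP.norm_forward_le hk (le_refl m) hk) (norm_nonneg x))
    _ = K ^ 2 * ‖Q m - P m‖ * ‖x‖ := by ring

theorem ExpDichotomyOn.of_ker_eq (hP : ExpDichotomyOn A {k | k ≤ m} P K α)
    (hproj : ∀ k ≤ m, Q k ∘L Q k = Q k)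
    (hinv : ∀ j k, j ≤ k → k ≤ m → Phi A k j ∘L Q j = Q k ∘L Phi A k j)
    (hker : ∀ k ≤ m, (Q k).toLinearMap.ker = (P k).toLinearMap.ker) :
    ∃ K', ExpDichotomyOn A {k | k ≤ m} Q K' α := by
  obtain ⟨Ψ, hΨ⟩ := hP.backward
  set L := K + K ^ 2 * ‖Q m - P m‖
  have hK : 0 ≤ K := zero_le_one.trans hP.one_le_K
  have hL : 0 ≤ L := by positivity
  have hQnorm : ∀ k ≤ m, ‖Q k‖ ≤ L := fun k hk => calc
    ‖Q k‖ = ‖P k + (Q k - P k)‖ := by rw [add_sub_cancel]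
    _ ≤ L := (norm_add_le _ _).trans
      (add_le_add (hP.norm_le hk) (norm_sub_le_of_ker_eq hP hproj hinv hker hk))
  have hQP : ∀ k ≤ m, Q k ∘L P k = Q k := fun k hk => ContinuousLinearMap.ext
    (apply_apply_eq_of_ker_le (hP.proj k hk) (hker k hk).ge)
  have hPQ : ∀ k ≤ m, (1 - P k) ∘L (1 - Q k) = 1 - Q k := fun k hk => by
    refine ContinuousLinearMap.ext fun x => ?_
    simp [apply_apply_eq_of_ker_le (hproj k hk) (hker k hk).le]
  refine ⟨(1 + L) * K, ⟨by nlinarith [hP.one_le_K], hP.alpha_pos, hproj, ?_,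
    fun j _ k hk hjk => hinv j k hjk hk, ?_, ?_, ?_⟩⟩
  · intro k hk j hj
    have hrange : ∀ i ≤ m, Module.finrank ℝ (Q i).toLinearMap.range =
        Module.finrank ℝ (P i).toLinearMap.range := fun i hi =>
      finrank_range_eq_of_finrank_ker_eq (by rw [hker i hi])
    rw [hrange k hk, hrange j hj]
    exact hP.rank_const k hk j hj
  · intro j hj k hk hjk
    calc ‖Phi A k j ∘L Q j‖ = ‖Q k ∘L (Phi A k j ∘L P j)‖ := by
          rw [← ContinuousLinearMap.comp_assoc, ← hinv j k hjk hk, ContinuousLinearMap.comp_assoc,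
            hQP j hj]
      _ ≤ L * (K * exp (-α * ((k : ℝ) - j))) := (ContinuousLinearMap.opNorm_comp_le _ _).trans
          (mul_le_mul (hQnorm k hk) (hP.forward j hj k hk hjk) (norm_nonneg _) hL)
      _ ≤ (1 + L) * K * exp (-α * ((k : ℝ) - j)) := by
          nlinarith [mul_nonneg hK (exp_pos (-α * ((k : ℝ) - j))).le]
  · intro k hk hk1
    rw [hker k hk, hker (k + 1) hk1]
    exact hP.bijOn k hk hk1
  · refine ⟨Ψ, fun j hj k hk hjk => ?_⟩
    obtain ⟨hleft, hright, hnorm⟩ := hΨ j hj k hk hjk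
    refine ⟨by rwa [hker j hj], by rwa [hker j hj, hker k hk], ?_⟩
    calc ‖Ψ j k ∘L (1 - Q k)‖ = ‖(Ψ j k ∘L (1 - P k)) ∘L (1 - Q k)‖ := by
          rw [ContinuousLinearMap.comp_assoc, hPQ k hk]
      _ ≤ K * exp (-α * ((k : ℝ) - j)) * (1 + L) := (ContinuousLinearMap.opNorm_comp_le _ _).trans
          (mul_le_mul hnorm ((norm_sub_le _ _).trans
            (add_le_add ContinuousLinearMap.norm_id_le (hQnorm k hk))) (norm_nonneg _)
            (by positivity))
      _ = (1 + L) * K * exp (-α * ((k : ℝ) - j)) := by ring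

end ChangeOfRange

section Extension

open Set Real

variable {n : ℕ} {A Q : ℤ → (Euc n →L[ℝ] Euc n)} {K α : ℝ} {m l : ℤ}

lemma ExpDichotomyOn.exists_forward_bound (hQ : ExpDichotomyOn A {k | k ≤ m} Q K α)
    (hml : m ≤ l) : ∃ C, ∀ j k, j ≤ k → k ≤ l →
      ‖Phi A k j ∘L Q j‖ ≤ C * exp (-α * ((k : ℝ) - j)) :=
  exists_exp_bound_of_cross_bound (b := fun k => ‖Phi A k m‖) hml hQ.alpha_pos.le
    (zero_le_one.trans hQ.one_le_K) (fun _ => norm_nonneg _)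
    (fun j k hjk hkm => hQ.forward j (hjk.trans hkm) k hkm hjk)
    (fun j k hjm hmk _ => by
      simp only [Phi_trans A hjm hmk, ContinuousLinearMap.comp_assoc]
      exact ContinuousLinearMap.opNorm_comp_le _ _)

lemma ExpDichotomyOn.exists_backward_bound (hQ : ExpDichotomyOn A {k | k ≤ m} Q K α)
    (hml : m ≤ l) (hproj : ∀ k ≤ l, Q k ∘L Q k = Q k) {Ψ : ℤ → ℤ → (Euc n →L[ℝ] Euc n)}
    (hΨ : ∀ j k, j ≤ k → k ≤ l →
      (∀ x ∈ (Q j).toLinearMap.ker, Ψ j k (Phi A k j x) = x) ∧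
      (∀ y ∈ (Q k).toLinearMap.ker, Ψ j k y ∈ (Q j).toLinearMap.ker ∧ Phi A k j (Ψ j k y) = y)) :
    ∃ C, ∀ j k, j ≤ k → k ≤ l → ‖Ψ j k ∘L (1 - Q k)‖ ≤ C * exp (-α * ((k : ℝ) - j)) := by
  obtain ⟨Ψ₀, hΨ₀⟩ := hQ.backward
  have hker : ∀ k ≤ l, ∀ x, (1 - Q k) x ∈ (Q k).toLinearMap.ker := fun k hk =>
    one_sub_apply_mem_ker (hproj k hk)
  have hΨ_left : ∀ j k, j ≤ k → k ≤ m → Ψ j k ∘L (1 - Q k) = Ψ₀ j k ∘L (1 - Q k) := by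
    intro j k hjk hkm
    refine ContinuousLinearMap.ext fun x => ?_
    obtain ⟨-, hright, -⟩ := hΨ₀ j (hjk.trans hkm) k hkm hjk
    obtain ⟨hy, hΦy⟩ := hright _ (hker k (hkm.trans hml) x)
    simp only [ContinuousLinearMap.comp_apply]
    conv_lhs => rw [← hΦy]
    exact (hΨ j k hjk (hkm.trans hml)).1 _ hy
  have hΨ_cross : ∀ j k, j ≤ m → m ≤ k → k ≤ l →
      Ψ j k ∘L (1 - Q k) = (Ψ j m ∘L (1 - Q m)) ∘L (Ψ m k ∘L (1 - Q k)) := by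
    intro j k hjm hmk hkl
    refine ContinuousLinearMap.ext fun x => ?_
    obtain ⟨hz, hΦz⟩ := (hΨ m k hmk hkl).2 _ (hker k hkl x)
    obtain ⟨hw, hΦw⟩ := (hΨ j m hjm hml).2 _ hz
    have hz' : (1 - Q m) (Ψ m k ((1 - Q k) x)) = Ψ m k ((1 - Q k) x) := by simpa using hz
    simp only [ContinuousLinearMap.comp_apply, hz']
    rw [← (hΨ j k (hjm.trans hmk) hkl).1 _ hw, Phi_trans_apply A hjm hmk, hΦw, hΦz]
  exact exists_exp_bound_of_cross_bound (b := fun k => ‖Ψ m k ∘L (1 - Q k)‖) hml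
    hQ.alpha_pos.le (zero_le_one.trans hQ.one_le_K) (fun _ => norm_nonneg _)
    (fun j k hjk hkm => by
      simp only [hΨ_left j k hjk hkm]
      exact (hΨ₀ j (hjk.trans hkm) k hkm hjk).2.2)
    (fun j k hjm hmk hkl => by
      simp only [hΨ_cross j k hjm hmk hkl, mul_comm ‖Ψ m k ∘L (1 - Q k)‖]
      exact ContinuousLinearMap.opNorm_comp_le _ _)

theorem ExpDichotomyOn.extend (hQ : ExpDichotomyOn A {k | k ≤ m} Q K α) (hml : m ≤ l)
    (hproj : ∀ k ≤ l, Q k ∘L Q k = Q k)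
    (hinv : ∀ j k, j ≤ k → k ≤ l → Phi A k j ∘L Q j = Q k ∘L Phi A k j)
    (hbij : ∀ j k, j ≤ k → k ≤ l →
      BijOn (Phi A k j) (Q j).toLinearMap.ker (Q k).toLinearMap.ker) :
    ∃ K', ExpDichotomyOn A {k | k ≤ l} Q K' α := by
  have hinverse : ∀ j k, ∃ Ψ : Euc n →L[ℝ] Euc n, j ≤ k → k ≤ l →
      (∀ x ∈ (Q j).toLinearMap.ker, Ψ (Phi A k j x) = x) ∧
      (∀ y ∈ (Q k).toLinearMap.ker, Ψ y ∈ (Q j).toLinearMap.ker ∧ Phi A k j (Ψ y) = y) := by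
    intro j k
    by_cases h : j ≤ k ∧ k ≤ l
    · obtain ⟨Ψ, hΨ⟩ := exists_invOn_of_bijOn (hbij j k h.1 h.2)
      exact ⟨Ψ, fun _ _ => hΨ⟩
    · exact ⟨0, fun hjk hkl => absurd ⟨hjk, hkl⟩ h⟩
  choose Ψ hΨ using hinverse
  obtain ⟨CF, hCF⟩ := hQ.exists_forward_bound hml
  obtain ⟨CB, hCB⟩ := hQ.exists_backward_bound hml hproj hΨ
  have hrank : ∀ k ≤ l, Module.finrank ℝ (Q k).toLinearMap.range =
      Module.finrank ℝ (Q l).toLinearMap.range := fun k hk =>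
    finrank_range_eq_of_finrank_ker_eq (finrank_eq_of_bijOn (hbij k l hk le_rfl))
  have hexp : ∀ j k : ℤ, 0 ≤ exp (-α * ((k : ℝ) - j)) := fun _ _ => (exp_pos _).le
  refine ⟨max 1 (max CF CB), ⟨le_max_left _ _, hQ.alpha_pos, hproj,
    fun k hk j hj => by rw [hrank k hk, hrank j hj], fun j _ k hk hjk => hinv j k hjk hk,
    fun j _ k hk hjk => (hCF j k hjk hk).trans (mul_le_mul_of_nonneg_right
      (le_max_of_le_right (le_max_left _ _)) (hexp j k)), fun k hk hk1 => ?_,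
    ⟨Ψ, fun j _ k hk hjk => ⟨(hΨ j k hjk hk).1, (hΨ j k hjk hk).2,
      (hCB j k hjk hk).trans (mul_le_mul_of_nonneg_right
        (le_max_of_le_right (le_max_right _ _)) (hexp j k))⟩⟩⟩⟩
  rw [← Phi_succ_self A k]
  exact hbij k (k + 1) (by omega) hk1

end Extension

section Continuation

open Set

variable {n : ℕ} {A P : ℤ → (Euc n →L[ℝ] Euc n)} {K α : ℝ} {m : ℤ}

/-- `N(P k)` for `k ≤ m`, continued forward as `Φ(k, m) N(P m)` for `k ≥ m`. -/
def extendedKer (A P : ℤ → (Euc n →L[ℝ] Euc n)) (m k : ℤ) : Submodule ℝ (Euc n) :=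
  (P (min k m)).toLinearMap.ker.map (Phi A k (min k m)).toLinearMap

lemma extendedKer_of_le {k : ℤ} (hk : k ≤ m) : extendedKer A P m k = (P k).toLinearMap.ker := by
  rw [extendedKer, min_eq_left hk, Phi_self]
  exact Submodule.map_id _

lemma map_extendedKer (hP : ExpDichotomyOn A {k | k ≤ m} P K α) {j k : ℤ} (hjk : j ≤ k) :
    (extendedKer A P m j).map (Phi A k j).toLinearMap = extendedKer A P m k := by
  have hj : min j m ≤ min k m := min_le_min_right m hjk
  rw [extendedKer, extendedKer, ← Submodule.map_comp, ← ContinuousLinearMap.toLinearMap_comp,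
    ← Phi_trans A (min_le_left j m) hjk, Phi_trans A hj (min_le_left k m),
    ContinuousLinearMap.toLinearMap_comp, Submodule.map_comp,
    hP.map_ker (min_le_right j m) (min_le_right k m) hj]

lemma injOn_extendedKer (hm : m ≤ 0) (hP : ExpDichotomyOn A {k | k ≤ m} P K α)
    (hinj : InjOn (Phi A 0 m) (P m).toLinearMap.ker) {j k : ℤ} (hjk : j ≤ k) (hk : k ≤ 0) :
    InjOn (Phi A k j) (extendedKer A P m j) := by
  have hj : min j m ≤ m := min_le_right j m
  have hinj₀ : InjOn (Phi A 0 (min j m)) (P (min j m)).toLinearMap.ker := by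
    rw [Phi_trans A hj hm, ContinuousLinearMap.coe_comp]
    exact hinj.comp (hP.bijOn_ker hj (le_refl m) hj).injOn (hP.bijOn_ker hj (le_refl m) hj).mapsTo
  rw [Phi_trans A (min_le_left j m) (hjk.trans hk), ContinuousLinearMap.coe_comp] at hinj₀
  have himage : (extendedKer A P m j : Set (Euc n)) =
      Phi A j (min j m) '' (P (min j m)).toLinearMap.ker :=
    Submodule.map_coe _ _
  have := hinj₀.image_of_comp
  rw [← himage, Phi_trans A hjk hk, ContinuousLinearMap.coe_comp] at this
  exact this.of_comp

lemma bijOn_extendedKer (hm : m ≤ 0) (hP : ExpDichotomyOn A {k | k ≤ m} P K α)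
    (hinj : InjOn (Phi A 0 m) (P m).toLinearMap.ker) {j k : ℤ} (hjk : j ≤ k) (hk : k ≤ 0) :
    BijOn (Phi A k j) (extendedKer A P m j) (extendedKer A P m k) := by
  rw [← map_extendedKer hP hjk, Submodule.map_coe]
  exact (injOn_extendedKer hm hP hinj hjk hk).bijOn_image

theorem exists_expDichotomyOn_of_injOn (hm : m ≤ 0) (hP : ExpDichotomyOn A {k | k ≤ m} P K α)
    (hinj : InjOn (Phi A 0 m) (P m).toLinearMap.ker) :
    ∃ (Q : ℤ → (Euc n →L[ℝ] Euc n)) (K' : ℝ), ExpDichotomyOn A {k | k ≤ 0} Q K' α ∧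
      Module.finrank ℝ (Q 0).toLinearMap.range = Module.finrank ℝ (P m).toLinearMap.range := by
  have hbij := fun j k (hjk : j ≤ k) (hk : k ≤ 0) => bijOn_extendedKer hm hP hinj hjk hk
  obtain ⟨Z, hZ⟩ := (extendedKer A P m 0).exists_isCompl
  have hcompl : ∀ k ≤ 0, IsCompl (Z.comap (Phi A 0 k).toLinearMap) (extendedKer A P m k) :=
    fun k hk => isCompl_comap_of_injOn (hbij k 0 hk le_rfl).injOn (by rwa [map_extendedKer hP hk])
  have hproj : ∀ k, ∃ Q : Euc n →L[ℝ] Euc n, k ≤ 0 → Q ∘L Q = Q ∧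
      Q.toLinearMap.range = Z.comap (Phi A 0 k).toLinearMap ∧
      Q.toLinearMap.ker = extendedKer A P m k := by
    intro k
    by_cases hk : k ≤ 0
    · obtain ⟨Q, hQ⟩ := exists_idempotent_range_ker (hcompl k hk)
      exact ⟨Q, fun _ => hQ⟩
    · exact ⟨0, fun h => absurd h hk⟩
  choose Q hQ using hproj
  have hker : ∀ k ≤ m, (Q k).toLinearMap.ker = (P k).toLinearMap.ker := fun k hk => by
    rw [(hQ k (hk.trans hm)).2.2, extendedKer_of_le hk]
  have hinv : ∀ j k, j ≤ k → k ≤ 0 → Phi A k j ∘L Q j = Q k ∘L Phi A k j := by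
    intro j k hjk hk
    obtain ⟨hQj, hrange_j, hker_j⟩ := hQ j (hjk.trans hk)
    obtain ⟨hQk, hrange_k, hker_k⟩ := hQ k hk
    refine comp_eq_comp_of_mapsTo hQj hQk (fun x hx => ?_) ?_
    · rw [SetLike.mem_coe, hrange_k, Submodule.mem_comap]
      rw [SetLike.mem_coe, hrange_j, Submodule.mem_comap] at hx
      rwa [ContinuousLinearMap.coe_coe, ← Phi_trans_apply A hjk hk]
    · rw [hker_j, hker_k]
      exact (hbij j k hjk hk).mapsTo
  obtain ⟨K₁, hQm⟩ := hP.of_ker_eq (fun k hk => (hQ k (hk.trans hm)).1)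
    (fun j k hjk hk => hinv j k hjk (hk.trans hm)) hker
  obtain ⟨K₂, hQ₀⟩ := hQm.extend hm (fun k hk => (hQ k hk).1) hinv fun j k hjk hk => by
    rw [(hQ j (hjk.trans hk)).2.2, (hQ k hk).2.2]
    exact hbij j k hjk hk
  refine ⟨Q, K₂, hQ₀, ?_⟩
  rw [hQ₀.rank_const 0 (le_refl (0 : ℤ)) m hm]
  exact finrank_range_eq_of_finrank_ker_eq (by rw [hker m le_rfl])

theorem injOn_Phi_of_expDichotomyOn {Q : ℤ → (Euc n →L[ℝ] Euc n)} {K' α' : ℝ} (hm : m ≤ 0)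
    (hP : ExpDichotomyOn A {k | k ≤ m} P K α) (hQ : ExpDichotomyOn A {k | k ≤ 0} Q K' α') :
    InjOn (Phi A 0 m) (P m).toLinearMap.ker :=
  (hQ.bijOn_ker hm (le_refl (0 : ℤ)) hm).injOn.mono
    (hP.ker_le_ker (hQ.mono fun k (hk : k ≤ m) => hk.trans hm))

end Continuation

/-- for `m < 0`, suppose the equation has an exponential dichotomy on
`(-∞, m]` with projection `P` of rank `r`. Then the equation has an exponential
dichotomy on `(-∞, 0]` with a projection of rank `r` if and only if `Φ(0,m)` is
one-to-one on `N(P(m))`. -/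
theorem statement13 {n : ℕ} (A P : ℤ → (Euc n →L[ℝ] Euc n)) (K α : ℝ)
    (m : ℤ) (hm : m < 0) (r : ℕ)
    (hED : ExpDichotomyOn A {k : ℤ | k ≤ m} P K α)
    (hrank : Module.finrank ℝ (LinearMap.range (P m : Euc n →ₗ[ℝ] Euc n)) = r) :
    (∃ (Q : ℤ → (Euc n →L[ℝ] Euc n)) (K' α' : ℝ),
        ExpDichotomyOn A {k : ℤ | k ≤ 0} Q K' α' ∧
        Module.finrank ℝ (LinearMap.range (Q 0 : Euc n →ₗ[ℝ] Euc n)) = r) ↔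
    Set.InjOn (Phi A 0 m) (LinearMap.ker (P m : Euc n →ₗ[ℝ] Euc n) : Set (Euc n)) := by
  constructor
  · rintro ⟨Q, K', α', hQ, -⟩
    exact injOn_Phi_of_expDichotomyOn hm.le hED hQ
  · intro hinj
    obtain ⟨Q, K', hQ, hQrank⟩ := exists_expDichotomyOn_of_injOn hm.le hED hinj
    exact ⟨Q, K', α, hQ, hQrank.trans hrank⟩
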